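/- arXiv:1712.03696 — 4 statements merged into one kernel-verified Lean document; each statement's English description precedes it below -/
import Mathlib

section
/- Let σ be a dyadically doubling measure on a dyadic cube structure: σ(Q) ≤ M₁ σ(Q') whenever Q' is a dyadic child of Q. Fix θ ∈ (0,1], ϑ ∈ (0,1), β ≤ 1/(M₁+1), and let Q have children Q', Q''_1,…,Q''_m. Suppose a set F ⊂ Q satisfies σ(F∩Q) ≥ (1−ϑβ)θ σ(Q) and σ(F∩Q') < (1−ϑ)θ σ(Q'). Then there exists a child Q''_i ≠ Q' with σ(F ∩ Q''_i) ≥ θ σ(Q''_i). -/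
open Set MeasureTheory ENNReal

noncomputable section

/-- Dyadic pigeonholing (Case 1b of Claim 3.52 in Hofmann–Martell): let `σ = μ` be dyadically
doubling (`μ Q ≤ M₁ μ Q'` for each child `Q'` of `Q`), `θ ∈ (0,1]`, `ϑ ∈ (0,1)`,
`β ≤ 1/(M₁+1)`.  If `F ⊆ Q` satisfies `μ(F ∩ Q) ≥ (1−ϑβ)θ μ(Q)` while
`μ(F ∩ Q') < (1−ϑ)θ μ(Q')` for a given child `Q'`, then some other child `Q''` satisfies
`μ(F ∩ Q'') ≥ θ μ(Q'')`. -/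
theorem dyadic_pigeonhole {X : Type*} [MeasurableSpace X] (μ : Measure X)
    (M₁ θ ϑ β : ℝ) (hM₁ : 0 < M₁)
    (hθ : 0 < θ) (hθ1 : θ ≤ 1) (hϑ : 0 < ϑ) (hϑ1 : ϑ < 1)
    (hβ : 0 < β) (hβM : β ≤ 1 / (M₁ + 1))
    (Q : Set X) (hQmeas : MeasurableSet Q) (hQfin : μ Q ≠ ⊤)
    (children : Finset (Set X))
    (hmeas : ∀ Q' ∈ children, MeasurableSet Q')
    (hdisj : (children : Set (Set X)).Pairwise Disjoint)
    (hcover : ⋃₀ (children : Set (Set X)) = Q)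
    (hdbl : ∀ Q' ∈ children, μ Q ≤ ENNReal.ofReal M₁ * μ Q')
    (Q' : Set X) (hQ' : Q' ∈ children)
    (F : Set X) (hF : MeasurableSet F) (hFQ : F ⊆ Q)
    (h1 : ENNReal.ofReal ((1 - ϑ * β) * θ) * μ Q ≤ μ (F ∩ Q))
    (h2 : μ (F ∩ Q') < ENNReal.ofReal ((1 - ϑ) * θ) * μ Q') :
    ∃ Q'' ∈ children, Q'' ≠ Q' ∧ ENNReal.ofReal θ * μ Q'' ≤ μ (F ∩ Q'') := by
  classical
  by_contra hcon
  push_neg at hcon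
  -- children subsets of Q
  have hsub : ∀ c ∈ children, c ⊆ Q := by
    intro c hc
    rw [← hcover]; exact subset_sUnion_of_mem hc
  have hfin : ∀ c ∈ children, μ c ≠ ⊤ := fun c hc =>
    ne_top_of_le_ne_top hQfin (measure_mono (hsub c hc))
  -- decompose μ Q
  have hQeq : μ Q = ∑ c ∈ children, μ c := by
    rw [← hcover, sUnion_eq_biUnion, Finset.set_biUnion_coe]
    exact measure_biUnion_finset (fun i hi j hj hij => hdisj hi hj hij) hmeas
  have hFeq : μ (F ∩ Q) = ∑ c ∈ children, μ (F ∩ c) := by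
    have : F ∩ Q = ⋃ c ∈ children, F ∩ c := by
      rw [← hcover, sUnion_eq_biUnion, Finset.set_biUnion_coe, inter_iUnion₂]
    rw [this]
    exact measure_biUnion_finset
      (fun i hi j hj hij => ((hdisj hi hj hij).mono inter_subset_right inter_subset_right))
      (fun c hc => hF.inter (hmeas c hc))
  set S : ℝ≥0∞ := ∑ c ∈ children.erase Q', μ c with hS
  set T : ℝ≥0∞ := ∑ c ∈ children.erase Q', μ (F ∩ c) with hT
  have hQsplit : μ Q = μ Q' + S := by
    rw [hQeq, ← Finset.add_sum_erase _ _ hQ']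
  have hFsplit : μ (F ∩ Q) = μ (F ∩ Q') + T := by
    rw [hFeq, ← Finset.add_sum_erase _ _ hQ']
  have hSfin : S ≠ ⊤ := by
    intro h; rw [hQsplit, h, add_top] at hQfin; exact hQfin rfl
  have hQ'fin : μ Q' ≠ ⊤ := hfin Q' hQ'
  -- bound T
  have hTle : T ≤ ENNReal.ofReal θ * S := by
    rw [hS, Finset.mul_sum]
    refine Finset.sum_le_sum fun c hc => ?_
    exact (hcon c (Finset.mem_of_mem_erase hc) (Finset.ne_of_mem_erase hc)).le
  -- strict inequality
  have hTfin : T ≠ ⊤ :=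
    ne_top_of_le_ne_top (ne_top_of_le_ne_top hQfin (measure_mono inter_subset_right))
      (hFsplit ▸ le_add_self)
  have hlt : μ (F ∩ Q) < ENNReal.ofReal ((1 - ϑ) * θ) * μ Q' + ENNReal.ofReal θ * S := by
    rw [hFsplit]
    exact ENNReal.add_lt_add_of_lt_of_le hTfin h2 hTle
  have key : ENNReal.ofReal ((1 - ϑ * β) * θ) * μ Q <
      ENNReal.ofReal ((1 - ϑ) * θ) * μ Q' + ENNReal.ofReal θ * S := lt_of_le_of_lt h1 hlt
  -- convert to reals
  have hβ1 : β < 1 := lt_of_le_of_lt hβM (by rw [div_lt_one (by linarith)]; linarith)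
  have hϑβ : ϑ * β < 1 := by nlinarith [mul_lt_mul_of_pos_left hβ1 hϑ]
  have hRHSfin : ENNReal.ofReal ((1 - ϑ) * θ) * μ Q' + ENNReal.ofReal θ * S ≠ ⊤ :=
    ENNReal.add_ne_top.2 ⟨ENNReal.mul_ne_top ENNReal.ofReal_ne_top hQ'fin,
      ENNReal.mul_ne_top ENNReal.ofReal_ne_top hSfin⟩
  have hreal := (ENNReal.toReal_lt_toReal
    (ENNReal.mul_ne_top ENNReal.ofReal_ne_top hQfin) hRHSfin).2 key
  rw [ENNReal.toReal_add (ENNReal.mul_ne_top ENNReal.ofReal_ne_top hQ'fin)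
      (ENNReal.mul_ne_top ENNReal.ofReal_ne_top hSfin),
    ENNReal.toReal_mul, ENNReal.toReal_mul, ENNReal.toReal_mul,
    ENNReal.toReal_ofReal (by nlinarith : (0:ℝ) ≤ (1 - ϑ * β) * θ),
    ENNReal.toReal_ofReal (by nlinarith : (0:ℝ) ≤ (1 - ϑ) * θ),
    ENNReal.toReal_ofReal hθ.le] at hreal
  have hab : (μ Q).toReal ≤ M₁ * (μ Q').toReal := by
    have := hdbl Q' hQ'
    have h := ENNReal.toReal_mono (ENNReal.mul_ne_top ENNReal.ofReal_ne_top hQ'fin) this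
    rwa [ENNReal.toReal_mul, ENNReal.toReal_ofReal hM₁.le] at h
  have haeq : (μ Q).toReal = (μ Q').toReal + S.toReal := by
    rw [hQsplit, ENNReal.toReal_add hQ'fin hSfin]
  have hb0 : 0 ≤ (μ Q').toReal := ENNReal.toReal_nonneg
  have hS0 : 0 ≤ S.toReal := ENNReal.toReal_nonneg
  have hβM₁ : β * (M₁ + 1) ≤ 1 := (le_div_iff₀ (by linarith : (0:ℝ) < M₁ + 1)).1 hβM
  have hβM1 : β * M₁ ≤ 1 := by nlinarith
  have h3 : ϑ * β * θ * (μ Q).toReal ≤ ϑ * β * θ * (M₁ * (μ Q').toReal) :=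
    mul_le_mul_of_nonneg_left hab (by positivity)
  have h4 : ϑ * β * θ * (M₁ * (μ Q').toReal) ≤ ϑ * θ * (μ Q').toReal := by
    nlinarith [mul_nonneg (mul_nonneg (mul_pos hϑ hθ).le hb0) (by linarith : (0:ℝ) ≤ 1 - β * M₁)]
  nlinarith [mul_pos hϑ hθ]
end
end

section
/- Let ρ ∈ (0,1), θ ∈ (0,1], ϑ ∈ (0,1), β < ρ/4, and let Q be a dyadic cube with σ a measure. Suppose Q is partitioned (up to a set F₀) into disjoint cubes belonging to four families F_g^{(1)}, F_g^{(2)}, F_b^{(1)}, F_b^{(2)}, with σ(F₀) < ε σ(Q), σ(∪_{F_g^{(1)}} Q_j) < ε σ(Q), and suppose F ⊂ Q satisfies σ(F) ≥ (1−ϑβ)θσ(Q), σ(F∩Q_j) ≤ (1−4ϑβρ^{-1})θσ(Q_j) for Q_j ∈ F_g^{(2)}, σ(F∩Q_j) ≤ θσ(Q_j) for Q_j ∈ F_b^{(2)}, and σ(∪_{F_g^{(2)}}Q_j) ≥ (ρ/2)σ(Q). Then, provided ε ≤ (4C)^{-1}ϑβθ for a suitable dimensional constant C, one has Σ_{Q_j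 ∈ F_b^{(1)}} σ(Q_j) ≥ (1/4)ϑβθ σ(Q). -/
/-!
Split `μ F` along the partition. The exceptional set `F₀` and the cubes of `F_g^{(1)}` carry at
most `2εμ(Q)`, the cubes of `F_b^{(1)}` at most their own measure, and on all other cubes `F` has
density at most `θ`, with a deficit `4ϑβθ/ρ` on `F_g^{(2)}`. As `F_g^{(2)}` fills a proportion
`ρ/2` of `Q`, this deficit amounts to `2ϑβθ μ(Q)`, twice the deficit `ϑβθ μ(Q)` that the lower
bound on `μ F` tolerates; the excess, up to the error `2εμ(Q)`, must be carried by `F_b^{(1)}`.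
The constant `C = 1` works.
-/

open Set MeasureTheory ENNReal

section Fibers

variable {X ι κ : Type*} [MeasurableSpace X] {μ : Measure X} {Q F : Set X} {Qj : ι → Set X}

theorem measure_le_measure_diff_iUnion_add_sum_fiber [Fintype κ] (lab : ι → κ) (hFQ : F ⊆ Q) :
    μ F ≤ μ (Q \ ⋃ i, Qj i) + ∑ b, μ (F ∩ ⋃ i ∈ {i | lab i = b}, Qj i) := by
  have hcover : F ⊆ (Q \ ⋃ i, Qj i) ∪ ⋃ b, F ∩ ⋃ i ∈ {i | lab i = b}, Qj i := by
    intro x hx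
    by_cases hxU : x ∈ ⋃ i, Qj i
    · obtain ⟨i, hi⟩ := mem_iUnion.mp hxU
      exact Or.inr (mem_iUnion.mpr ⟨lab i, hx, mem_biUnion (by rfl) hi⟩)
    · exact Or.inl ⟨hFQ hx, hxU⟩
  calc μ F ≤ _ := measure_mono hcover
    _ ≤ _ := (measure_union_le _ _).trans (by gcongr; exact measure_iUnion_fintype_le μ _)

theorem measure_inter_biUnion_fiber_le [Countable ι] (lab : ι → κ) (b : κ) {c : ℝ≥0∞}
    (h : ∀ i, lab i = b → μ (F ∩ Qj i) ≤ c * μ (Qj i)) :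
    μ (F ∩ ⋃ i ∈ {i | lab i = b}, Qj i) ≤ c * ∑' i : {i // lab i = b}, μ (Qj i) := by
  rw [inter_iUnion₂, ← ENNReal.tsum_mul_left]
  exact (measure_biUnion_le μ (to_countable _) _).trans (ENNReal.tsum_le_tsum fun i ↦ h i i.2)

theorem sum_tsum_fiber_le_measure [Countable ι] [Fintype κ] (lab : ι → κ) (s : Finset κ)
    (hm : ∀ i, MeasurableSet (Qj i)) (hd : Pairwise (Function.onFun Disjoint Qj))
    (hsub : ∀ i, Qj i ⊆ Q) :
    ∑ b ∈ s, ∑' i : {i // lab i = b}, μ (Qj i) ≤ μ Q :=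
  calc ∑ b ∈ s, ∑' i : {i // lab i = b}, μ (Qj i)
      ≤ ∑ b, ∑' i : {i // lab i = b}, μ (Qj i) := Finset.sum_le_sum_of_subset s.subset_univ
    _ = ∑' i, μ (Qj i) := by rw [← ENNReal.tsum_fiberwise _ lab, tsum_fintype]; rfl
    _ ≤ μ (⋃ i, Qj i) := tsum_meas_le_meas_iUnion_of_disjoint μ hm hd
    _ ≤ μ Q := measure_mono (iUnion_subset hsub)

theorem measure_le_of_fin_four_labels [Countable ι] (lab : ι → Fin 4) (hFQ : F ⊆ Q)
    {c₁ c₃ : ℝ≥0∞} (h₁ : ∀ i, lab i = 1 → μ (F ∩ Qj i) ≤ c₁ * μ (Qj i))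
    (h₃ : ∀ i, lab i = 3 → μ (F ∩ Qj i) ≤ c₃ * μ (Qj i)) :
    μ F ≤ μ (Q \ ⋃ i, Qj i) + μ (⋃ i ∈ {i | lab i = 0}, Qj i)
      + c₁ * ∑' i : {i // lab i = 1}, μ (Qj i) + ∑' i : {i // lab i = 2}, μ (Qj i)
      + c₃ * ∑' i : {i // lab i = 3}, μ (Qj i) := by
  refine (measure_le_measure_diff_iUnion_add_sum_fiber (Qj := Qj) lab hFQ).trans ?_
  simp only [Fin.sum_univ_four, ← add_assoc]
  gcongr
  · exact inter_subset_right
  · exact measure_inter_biUnion_fiber_le lab 1 h₁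
  · exact (measure_mono inter_subset_right).trans (measure_biUnion_le μ (to_countable _) Qj)
  · exact measure_inter_biUnion_fiber_le lab 3 h₃

end Fibers

namespace ENNReal

/-- Lowering the density from `t = a + c` to `a` on a part `s₁ ≥ l m` of a set of measure `m`
frees the mass `c l m`. -/
theorem add_mul_le_of_density_drop {m e s₁ s₂ s₃ a c d l t : ℝ≥0∞} (hac : a + c = t)
    (h : d * m ≤ e + a * s₁ + s₂ + t * s₃) (hs : s₁ + s₃ ≤ m) (hs₁ : l * m ≤ s₁) :
    (d + c * l) * m ≤ e + t * m + s₂ :=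
  calc (d + c * l) * m = d * m + c * (l * m) := by ring
    _ ≤ e + a * s₁ + s₂ + t * s₃ + c * s₁ := by gcongr
    _ = e + t * (s₁ + s₃) + s₂ := by rw [← hac]; ring
    _ ≤ e + t * m + s₂ := by gcongr

end ENNReal

/-- The labels `0, 1, 2, 3` encode the families `F_g^{(1)}, F_g^{(2)}, F_b^{(1)}, F_b^{(2)}`. -/
theorem bookkeeping_ample_bad_family :
    ∃ C : ℝ, 0 < C ∧
      ∀ {X : Type} [mX : MeasurableSpace X] (μ : Measure X)
        (ρ θ ϑ β ε : ℝ),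
        0 < ρ → ρ < 1 → 0 < θ → θ ≤ 1 → 0 < ϑ → ϑ < 1 → 0 < β → β < ρ / 4 →
        0 < ε → ε ≤ ϑ * β * θ / (4 * C) →
        ∀ (Q : Set X), MeasurableSet Q → μ Q ≠ ⊤ →
        ∀ (ι : Type) (_ : Countable ι) (Qj : ι → Set X) (lab : ι → Fin 4),
          (∀ i, MeasurableSet (Qj i)) → (∀ i, Qj i ⊆ Q) →
          Pairwise (Function.onFun Disjoint Qj) →
          -- σ(F₀) < ε σ(Q)
          μ (Q \ ⋃ i, Qj i) < ENNReal.ofReal ε * μ Q →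
          -- σ(∪_{F_good^{(1)}} Q_j) < ε σ(Q)
          μ (⋃ i ∈ {i | lab i = 0}, Qj i) < ENNReal.ofReal ε * μ Q →
          ∀ (F : Set X), MeasurableSet F → F ⊆ Q →
          -- σ(F) ≥ (1−ϑβ)θ σ(Q)
          ENNReal.ofReal ((1 - ϑ * β) * θ) * μ Q ≤ μ F →
          -- σ(F∩Q_j) ≤ (1−4ϑβρ⁻¹)θ σ(Q_j) on F_good^{(2)}
          (∀ i, lab i = 1 → μ (F ∩ Qj i) ≤ ENNReal.ofReal ((1 - 4 * ϑ * β / ρ) * θ) * μ (Qj i)) →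
          -- σ(F∩Q_j) ≤ θ σ(Q_j) on F_bad^{(2)}
          (∀ i, lab i = 3 → μ (F ∩ Qj i) ≤ ENNReal.ofReal θ * μ (Qj i)) →
          -- σ(∪_{F_good^{(2)}} Q_j) ≥ (ρ/2) σ(Q)
          ENNReal.ofReal (ρ / 2) * μ Q ≤ (∑' i : {i // lab i = 1}, μ (Qj i.1)) →
          ENNReal.ofReal (ϑ * β * θ / 4) * μ Q ≤ ∑' i : {i // lab i = 2}, μ (Qj i.1) := by
  refine ⟨1, one_pos, ?_⟩
  intro X _ μ ρ θ ϑ β ε hρ _ hθ _ hϑ _ hβ hβρ hε hεC Q _ hQ ι _ Qj lab hQjm hQjQ hdisj hF₀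
    hG₁ F _ hFQ hF hG₂ hB₂ hG₂_large
  set S : Fin 4 → ℝ≥0∞ := fun b ↦ ∑' i : {i // lab i = b}, μ (Qj i)
  have hS₁₃ : S 1 + S 3 ≤ μ Q := by
    simpa only [Finset.sum_pair (by decide : (1 : Fin 4) ≠ 3)] using
      sum_tsum_fiber_le_measure (μ := μ) lab {1, 3} hQjm hdisj hQjQ
  have hF_up : μ F ≤ ENNReal.ofReal ε * μ Q + ENNReal.ofReal ε * μ Q
      + ENNReal.ofReal ((1 - 4 * ϑ * β / ρ) * θ) * S 1 + S 2 + ENNReal.ofReal θ * S 3 :=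
    (measure_le_of_fin_four_labels lab hFQ hG₂ hB₂).trans (by gcongr)
  have hϑβ : 4 * ϑ * β ≤ ρ := by nlinarith
  have hsplit : ENNReal.ofReal ((1 - 4 * ϑ * β / ρ) * θ) + ENNReal.ofReal (4 * ϑ * β / ρ * θ)
      = ENNReal.ofReal θ := by
    rw [← ofReal_add (mul_nonneg (by rwa [sub_nonneg, div_le_one hρ]) hθ.le) (by positivity)]
    congr 1
    ring
  have hgain : ENNReal.ofReal (4 * ϑ * β / ρ * θ) * ENNReal.ofReal (ρ / 2)
      = ENNReal.ofReal (2 * ϑ * β * θ) := by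
    rw [← ofReal_mul (by positivity)]
    congr 1
    field_simp
    ring
  have hcore := add_mul_le_of_density_drop hsplit (hF.trans hF_up) hS₁₃ hG₂_large
  rw [hgain, ← ofReal_add (mul_nonneg (by linarith) hθ.le) (by positivity)] at hcore
  refine ENNReal.le_of_add_le_add_left (a := ENNReal.ofReal (2 * ε + θ) * μ Q) (by finiteness) ?_
  calc ENNReal.ofReal (2 * ε + θ) * μ Q + ENNReal.ofReal (ϑ * β * θ / 4) * μ Q
      ≤ ENNReal.ofReal ((1 - ϑ * β) * θ + 2 * ϑ * β * θ) * μ Q := by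
        rw [← add_mul, ← ofReal_add (by positivity) (by positivity)]
        gcongr ENNReal.ofReal ?_ * _
        linarith
    _ ≤ _ := hcore
    _ = ENNReal.ofReal (2 * ε + θ) * μ Q + S 2 := by
        rw [ofReal_add (by positivity) hθ.le, ofReal_mul zero_le_two, ofReal_ofNat]
        ring
end

section
/- Suppose a bounded open set O ⊂ ℝ^{n+1} with n-dimensional ADR boundary (upper and lower bounds with constant C_{ADR}) satisfies: for every x ∈ ∂O and 0 < r < diam O, |B(x,r) \ cl(O)| ≥ c r^{n+1} and |B(x,r) ∩ O| ≥ c r^{n+1}. Then O satisfies a two-sided corkscrew condition: there is c' > 0 depending only on n, c, C_{ADR}, such that for every x ∈ ∂O and 0 < r < diam O there exist balls B(X₁,c'r) ⊂ B(x,r) ∩ O and B(X₂,c'r) ⊂ B(x,r) \ cl(O). -/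
open Metric MeasureTheory Set

noncomputable section

/-- A preconnected set meeting both `S` and its complement meets the frontier of `S`. -/
lemma aux_frontier {E : Type*} [TopologicalSpace E] {t S : Set E}
    (ht : IsPreconnected t) (h1 : (t ∩ S).Nonempty) (h2 : (t \ S).Nonempty) :
    (t ∩ frontier S).Nonempty := by
  by_contra h
  rw [not_nonempty_iff_eq_empty] at h
  have hcover : t ⊆ interior S ∪ (closure S)ᶜ := by
    intro y hy
    have hyf : y ∉ frontier S := fun hf => (eq_empty_iff_forall_notMem.1 h y) ⟨hy, hf⟩
    by_cases hyc : y ∈ closure S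
    · left
      by_contra hyi
      exact hyf ⟨hyc, hyi⟩
    · right; exact hyc
  obtain ⟨p, hpt, hpS⟩ := h1
  obtain ⟨q, hqt, hqS⟩ := h2
  have hp : p ∈ interior S := by
    rcases hcover hpt with hp | hp
    · exact hp
    · exact absurd (subset_closure hpS) hp
  have hq : q ∈ (closure S)ᶜ := by
    rcases hcover hqt with hq | hq
    · exact absurd (interior_subset hq) hqS
    · exact hq
  obtain ⟨z, hz⟩ := ht (interior S) (closure S)ᶜ isOpen_interior isClosed_closure.isOpen_compl
    hcover ⟨p, hpt, hp⟩ ⟨q, hqt, hq⟩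
  exact hz.2.2 (subset_closure (interior_subset hz.2.1))

/-- Key quantitative lemma: if the volume of `ball x (r/4) ∩ S` is at least `c (r/4)^{n+1}`,
the frontier of `S` lies in an upper-and-lower ADR set `F`, and `δ` is small enough, then
`S` contains a corkscrew ball of radius `δ` inside `ball x r`. -/
lemma corkscrew_aux (n : ℕ) (c cA CA W : ℝ) (hc : 0 < c) (hcA : 0 < cA) (hCA : 0 < CA) (hW0 : 0 ≤ W)
    (x : EuclideanSpace ℝ (Fin (n+1))) (r δ : ℝ) (hr : 0 < r) (hδ : 0 < δ) (hδr : δ ≤ r/100)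
    (hW : volume (ball (0 : EuclideanSpace ℝ (Fin (n+1))) 1) = ENNReal.ofReal W)
    (F S : Set (EuclideanSpace ℝ (Fin (n+1)))) (hF : IsClosed F) (hFS : frontier S ⊆ F)
    (hlow : ∀ z ∈ F, dist z x ≤ r/4 + δ →
      ENNReal.ofReal (cA * δ^n) ≤ μH[(n : ℝ)] (ball z δ ∩ F))
    (hup : μH[(n : ℝ)] (ball x (r/2) ∩ F) ≤ ENNReal.ofReal (CA * (r/2)^n))
    (hvol : ENNReal.ofReal (c * (r/4)^(n+1)) ≤ volume (ball x (r/4) ∩ S))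
    (harith : 6^(n+1) * δ * W * CA * (r/2)^n < c * (r/4)^(n+1) * cA) :
    ∃ X, ball X δ ⊆ ball x r ∩ S := by
  by_contra hcon
  push_neg at hcon
  -- every point of `ball x (r/4) ∩ S` is close to the frontier
  have step1 : ∀ X ∈ ball x (r/4) ∩ S, ∃ z ∈ F, dist X z < δ ∧ dist z x ≤ r/4 + δ := by
    intro X hX
    obtain ⟨hXx, hXS⟩ := hX
    have hXx' : dist X x < r/4 := mem_ball.1 hXx
    have hb1 : ball X δ ⊆ ball x r := by
      intro y hy
      have hy' : dist y X < δ := mem_ball.1 hy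
      have : dist y x ≤ dist y X + dist X x := dist_triangle _ _ _
      exact mem_ball.2 (by linarith)
    have hnsub : ¬ ball X δ ⊆ S := by
      intro h
      exact hcon X (subset_inter hb1 h)
    obtain ⟨y, hy, hyS⟩ := not_subset.1 hnsub
    obtain ⟨z, hzb, hzf⟩ := aux_frontier (convex_ball X δ).isPreconnected
      ⟨X, mem_ball_self hδ, hXS⟩ ⟨y, hy, hyS⟩
    refine ⟨z, hFS hzf, ?_, ?_⟩
    · exact (dist_comm X z) ▸ (mem_ball.1 hzb)
    · have : dist z X < δ := mem_ball.1 hzb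
      have := dist_triangle z X x
      linarith
  -- Vitali covering of the boundary region
  set A : Set (EuclideanSpace ℝ (Fin (n+1))) := {z | z ∈ F ∧ dist z x ≤ r/4 + δ} with hA
  obtain ⟨u, huA, hud, hucov⟩ :=
    Vitali.exists_disjoint_subfamily_covering_enlargement_closedBall A id (fun _ => δ) δ
      (fun a _ => le_rfl) 5 (by norm_num)
  have hucount : u.Countable := by
    refine Set.PairwiseDisjoint.countable_of_isOpen
      (hud.mono (fun z => ball_subset_closedBall)) (fun _ _ => isOpen_ball)
      (fun _ _ => nonempty_ball.2 hδ)
  -- the covering of `ball x (r/4) ∩ S` by enlarged balls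
  have key : ball x (r/4) ∩ S ⊆ ⋃ w ∈ u, ball w (6*δ) := by
    intro X hX
    obtain ⟨z, hzF, hXz, hzx⟩ := step1 X hX
    have hzA : z ∈ A := ⟨hzF, hzx⟩
    obtain ⟨w, hwu, hwb⟩ := hucov z hzA
    have hz5 : z ∈ closedBall (id w) (5*δ) := hwb (mem_closedBall_self hδ.le)
    have hz5' : dist z w ≤ 5*δ := mem_closedBall.1 hz5
    have : dist X w ≤ dist X z + dist z w := dist_triangle _ _ _
    exact mem_biUnion hwu (mem_ball.2 (by linarith))
  -- volume of an enlarged ball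
  have hball : ∀ w : EuclideanSpace ℝ (Fin (n+1)),
      volume (ball w (6*δ)) = ENNReal.ofReal ((6*δ)^(n+1)) * ENNReal.ofReal W := by
    intro w
    rw [Measure.addHaar_ball volume w (by positivity : (0:ℝ) ≤ 6*δ), hW, finrank_euclideanSpace_fin]
  set K : ENNReal := ENNReal.ofReal ((6*δ)^(n+1)) * ENNReal.ofReal W / ENNReal.ofReal (cA*δ^n)
    with hKdef
  have hK : K * ENNReal.ofReal (cA*δ^n)
      = ENNReal.ofReal ((6*δ)^(n+1)) * ENNReal.ofReal W := by
    rw [hKdef]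
    exact ENNReal.div_mul_cancel (ENNReal.ofReal_pos.2 (by positivity)).ne' ENNReal.ofReal_ne_top
  have hdisj2 : u.PairwiseDisjoint (fun w => ball w δ ∩ F) :=
    hud.mono (fun z => inter_subset_left.trans ball_subset_closedBall)
  have hmeas : ∀ w ∈ u, MeasurableSet (ball w δ ∩ F) :=
    fun w _ => measurableSet_ball.inter hF.measurableSet
  have hsub2 : (⋃ w ∈ u, ball w δ ∩ F) ⊆ ball x (r/2) ∩ F := by
    refine iUnion₂_subset fun w hw => ?_
    have hwA : w ∈ A := huA hw
    rintro y ⟨hy1, hy2⟩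
    have hy1' : dist y w < δ := mem_ball.1 hy1
    have hwx : dist w x ≤ r/4 + δ := hwA.2
    have := dist_triangle y w x
    exact ⟨mem_ball.2 (by linarith), hy2⟩
  have main : ENNReal.ofReal (c*(r/4)^(n+1)) ≤ K * ENNReal.ofReal (CA*(r/2)^n) := calc
    ENNReal.ofReal (c*(r/4)^(n+1)) ≤ volume (ball x (r/4) ∩ S) := hvol
    _ ≤ volume (⋃ w ∈ u, ball w (6*δ)) := measure_mono key
    _ ≤ ∑' w : u, volume (ball (w : EuclideanSpace ℝ (Fin (n+1))) (6*δ)) :=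
        measure_biUnion_le volume hucount _
    _ = ∑' _w : u, K * ENNReal.ofReal (cA*δ^n) := by
        refine tsum_congr fun w => ?_
        rw [hball, ← hK]
    _ ≤ ∑' w : u, K * μH[(n : ℝ)] (ball (w : EuclideanSpace ℝ (Fin (n+1))) δ ∩ F) := by
        refine ENNReal.tsum_le_tsum fun w => mul_le_mul_right ?_ K
        exact hlow w (huA w.2).1 (huA w.2).2
    _ = K * ∑' w : u, μH[(n : ℝ)] (ball (w : EuclideanSpace ℝ (Fin (n+1))) δ ∩ F) :=
        ENNReal.tsum_mul_left
    _ = K * μH[(n : ℝ)] (⋃ w ∈ u, ball w δ ∩ F) := by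
        rw [measure_biUnion hucount hdisj2 hmeas]
    _ ≤ K * μH[(n : ℝ)] (ball x (r/2) ∩ F) := mul_le_mul_right (measure_mono hsub2) K
    _ ≤ K * ENNReal.ofReal (CA*(r/2)^n) := mul_le_mul_right hup K
  have main2 := mul_le_mul_left main (ENNReal.ofReal (cA*δ^n))
  rw [mul_right_comm, hK] at main2
  rw [← ENNReal.ofReal_mul (by positivity), ← ENNReal.ofReal_mul (by positivity),
    ← ENNReal.ofReal_mul (by positivity)] at main2
  have hreal : c*(r/4)^(n+1) * (cA*δ^n) ≤ (6*δ)^(n+1) * W * (CA*(r/2)^n) :=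
    (ENNReal.ofReal_le_ofReal_iff (by positivity)).1 main2
  have h1 : (6*δ)^(n+1) * W * (CA*(r/2)^n) = (6^(n+1)*δ*W*CA*(r/2)^n) * δ^n := by
    rw [mul_pow, pow_succ]; ring
  have h2 : c*(r/4)^(n+1) * (cA*δ^n) = (c*(r/4)^(n+1)*cA) * δ^n := by ring
  rw [h1, h2] at hreal
  have e := mul_lt_mul_of_pos_right harith (pow_pos hδ n)
  linarith

/-- Two-sided volume density plus ADR boundary implies the two-sided corkscrew condition:
if `O ⊂ ℝ^{n+1}` is bounded open with n-dimensional ADR boundary, and for all `x ∈ ∂O`,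
`0 < r < diam O` one has `|B(x,r) \ cl O| ≥ c r^{n+1}` and `|B(x,r) ∩ O| ≥ c r^{n+1}`, then
there is `c' > 0`, depending only on `n, c` and the ADR constants, such that every such ball
contains interior and exterior corkscrew balls of radius `c' r`. -/
theorem volume_density_implies_corkscrews (n : ℕ) (c cA CA : ℝ)
    (hc : 0 < c) (hcA : 0 < cA) (hCA : 0 < CA) :
    ∃ c' : ℝ, 0 < c' ∧
      ∀ (O : Set (EuclideanSpace ℝ (Fin (n+1)))),
        IsOpen O → Bornology.IsBounded O → O.Nonempty → (frontier O).Nonempty →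
        -- ∂O is n-dimensional ADR
        (∀ x ∈ frontier O, ∀ r : ℝ, 0 < r → r < Metric.diam O →
          ENNReal.ofReal (cA * r ^ n) ≤ μH[(n : ℝ)] (Metric.ball x r ∩ frontier O) ∧
            μH[(n : ℝ)] (Metric.ball x r ∩ frontier O) ≤ ENNReal.ofReal (CA * r ^ n)) →
        -- two-sided volume density
        (∀ x ∈ frontier O, ∀ r : ℝ, 0 < r → r < Metric.diam O →
          ENNReal.ofReal (c * r ^ (n+1)) ≤ volume (Metric.ball x r \ closure O) ∧
            ENNReal.ofReal (c * r ^ (n+1)) ≤ volume (Metric.ball x r ∩ O)) →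
        ∀ x ∈ frontier O, ∀ r : ℝ, 0 < r → r < Metric.diam O →
          (∃ X₁, Metric.ball X₁ (c' * r) ⊆ Metric.ball x r ∩ O) ∧
          (∃ X₂, Metric.ball X₂ (c' * r) ⊆ Metric.ball x r \ closure O) := by
  set W : ℝ := (volume (ball (0 : EuclideanSpace ℝ (Fin (n+1))) 1)).toReal with hWdef
  have hWvol : volume (ball (0 : EuclideanSpace ℝ (Fin (n+1))) 1) = ENNReal.ofReal W := by
    rw [hWdef, ENNReal.ofReal_toReal measure_ball_lt_top.ne]
  have hW0 : 0 < W := ENNReal.toReal_pos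
    (measure_ball_pos volume (0 : EuclideanSpace ℝ (Fin (n+1))) one_pos).ne'
    measure_ball_lt_top.ne
  set c' : ℝ := min (1/100) (c * cA / (24^(n+1) * W * CA * 2)) with hc'def
  have hc'pos : 0 < c' := lt_min (by norm_num) (by positivity)
  have hc'1 : c' ≤ 1/100 := min_le_left _ _
  have hc'2 : c' ≤ c * cA / (24^(n+1) * W * CA * 2) := min_le_right _ _
  refine ⟨c', hc'pos, ?_⟩
  intro O hO hObd hOne hOfne hADR hdens x hx r hr0 hrd
  set δ : ℝ := c' * r with hδdef
  have hδ0 : 0 < δ := mul_pos hc'pos hr0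
  have hδr : δ ≤ r/100 := by
    rw [hδdef]
    calc c' * r ≤ (1/100) * r := mul_le_mul_of_nonneg_right hc'1 hr0.le
    _ = r/100 := by ring
  have hδdiam : δ < Metric.diam O := by
    have : δ ≤ r/100 := hδr
    linarith
  -- the arithmetic smallness condition
  have harith : 6^(n+1) * δ * W * CA * (r/2)^n < c * (r/4)^(n+1) * cA := by
    have h24 : (24:ℝ)^(n+1) = 6^(n+1) * 4^(n+1) := by
      rw [← mul_pow]; norm_num
    have hrp : (0:ℝ) < r^n := pow_pos hr0 n
    have hstep1 : 6^(n+1) * δ * W * CA * (r/2)^n ≤ 6^(n+1) * δ * W * CA * r^n := by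
      have : (r/2)^n ≤ r^n := pow_le_pow_left₀ (by positivity) (by linarith) n
      have hpos : (0:ℝ) ≤ 6^(n+1) * δ * W * CA := by positivity
      nlinarith [this, hpos]
    have hδle : δ ≤ c * cA / (24^(n+1) * W * CA * 2) * r :=
      mul_le_mul_of_nonneg_right hc'2 hr0.le
    have hstep2 : 6^(n+1) * δ * W * CA * r^n
        ≤ 6^(n+1) * (c * cA / (24^(n+1) * W * CA * 2) * r) * W * CA * r^n := by
      have hpos : (0:ℝ) ≤ 6^(n+1) * W * CA * r^n := by positivity
      nlinarith [hδle, hpos]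
    have hstep3 : 6^(n+1) * (c * cA / (24^(n+1) * W * CA * 2) * r) * W * CA * r^n
        = c * cA * r^(n+1) / (4^(n+1) * 2) := by
      rw [h24]
      have h6 : (6:ℝ)^(n+1) ≠ 0 := by positivity
      have h4 : (4:ℝ)^(n+1) ≠ 0 := by positivity
      field_simp
      ring_nf
    have hstep4 : c * cA * r^(n+1) / (4^(n+1) * 2) < c * (r/4)^(n+1) * cA := by
      have h4 : (0:ℝ) < 4^(n+1) := by positivity
      have hrp1 : (0:ℝ) < r^(n+1) := pow_pos hr0 _
      have heq : c * (r/4)^(n+1) * cA = c * cA * r^(n+1) / 4^(n+1) := by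
        rw [div_pow]; ring
      rw [heq]
      exact div_lt_div_of_pos_left (by positivity) h4 (by linarith)
    calc 6^(n+1) * δ * W * CA * (r/2)^n ≤ 6^(n+1) * δ * W * CA * r^n := hstep1
      _ ≤ 6^(n+1) * (c * cA / (24^(n+1) * W * CA * 2) * r) * W * CA * r^n := hstep2
      _ = c * cA * r^(n+1) / (4^(n+1) * 2) := hstep3
      _ < c * (r/4)^(n+1) * cA := hstep4
  -- common hypotheses for the key lemma
  have hlow : ∀ z ∈ frontier O, dist z x ≤ r/4 + δ →
      ENNReal.ofReal (cA * δ^n) ≤ μH[(n : ℝ)] (ball z δ ∩ frontier O) :=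
    fun z hz _ => (hADR z hz δ hδ0 hδdiam).1
  have hup : μH[(n : ℝ)] (ball x (r/2) ∩ frontier O) ≤ ENNReal.ofReal (CA * (r/2)^n) :=
    (hADR x hx (r/2) (by linarith) (by linarith)).2
  have hr4 : 0 < r/4 := by linarith
  have hr4d : r/4 < Metric.diam O := by linarith
  constructor
  · -- interior corkscrew
    refine corkscrew_aux n c cA CA W hc hcA hCA hW0.le x r δ hr0 hδ0 hδr hWvol (frontier O) O
      isClosed_frontier subset_rfl hlow hup ?_ harith
    exact (hdens x hx (r/4) hr4 hr4d).2
  · -- exterior corkscrew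
    have hext := corkscrew_aux n c cA CA W hc hcA hCA hW0.le x r δ hr0 hδ0 hδr hWvol (frontier O)
      (closure O)ᶜ isClosed_frontier
      (by rw [frontier_compl]; exact frontier_closure_subset)
      hlow hup ?_ harith
    · obtain ⟨X, hX⟩ := hext
      exact ⟨X, hX.trans (by rw [diff_eq])⟩
    · have := (hdens x hx (r/4) hr4 hr4d).1
      rwa [diff_eq] at this
end
end

section
/- Let O ⊂ ℝ^{n+1} be bounded open satisfying the interior corkscrew condition, and suppose for every x ∈ ∂O and 0 < r < diam O one has |B(x,r) \ cl(O)| ≥ c r^{n+1}. Then ∂O satisfies the lower ADR bound: H^n(B(x,r) ∩ ∂O) ≥ c' r^n for all x ∈ ∂O, 0 < r < diam O, with c' depending on n, c and the corkscrew constant, via the relative isoperimetric inequality. -/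
/-!
The isoperimetric inequality can be replaced by a projection argument. Fix a corkscrew ball
`B(X, c₀r) ⊆ B(x, r) ∩ O` and cover the unit sphere by `N` balls of radius `c₀/2` centred at unit
vectors `v`; `N` depends only on `n` and `c₀`. For every `y ∈ B(x, r) \ cl O` some `v` puts
`y - ‖y - X‖ v` inside the corkscrew ball, so the segment between these two points meets
`B(x, r) ∩ ∂O` on the line `y + ℝ v`. The `v` carrying at least `1/N` of the exterior volume
gives a set lying in a slab of width `2r` orthogonal to `v` whose shadow along `v` is contained
in the shadow of `B(x, r) ∩ ∂O`. Projections are `1`-Lipschitz, hence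
`c rⁿ⁺¹ ≤ N · 2r · Hⁿ(B(x, r) ∩ ∂O)`.
-/

open Metric MeasureTheory Set Module
open scoped ENNReal RealInnerProductSpace

theorem IsPreconnected.inter_frontier_nonempty {α : Type*} [TopologicalSpace α] {s t : Set α}
    (hs : IsPreconnected s) (hst : (s ∩ t).Nonempty) (hs't : (s \ t).Nonempty) :
    (s ∩ frontier t).Nonempty := by
  by_contra h
  have hcover : s ⊆ interior t ∪ (closure t)ᶜ := fun p hp => by
    by_cases hpc : p ∈ closure t
    · exact Or.inl (by_contra fun hpi => h ⟨p, hp, hpc, hpi⟩)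
    · exact Or.inr hpc
  obtain ⟨p, hps, hpt⟩ := hst
  obtain ⟨q, hqs, hqt⟩ := hs't
  obtain ⟨z, -, hzi, hzc⟩ := hs _ _ isOpen_interior isClosed_closure.isOpen_compl hcover
    ⟨p, hps, (hcover hps).resolve_right (not_not.2 (subset_closure hpt))⟩
    ⟨q, hqs, (hcover hqs).resolve_left fun hqi => hqt (interior_subset hqi)⟩
  exact hzc (interior_subset_closure hzi)

theorem exists_mem_Icc_add_smul_mem_frontier {E : Type*} [AddCommGroup E] [Module ℝ E]
    [TopologicalSpace E] [ContinuousAdd E] [ContinuousSMul ℝ E] {O : Set E} {y w : E}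
    (hy : y ∉ O) (hw : y + w ∈ O) : ∃ t ∈ Icc (0 : ℝ) 1, y + t • w ∈ frontier O := by
  have hconn : IsPreconnected ((fun t : ℝ => y + t • w) '' Icc 0 1) :=
    isPreconnected_Icc.image _ (by fun_prop)
  obtain ⟨-, ⟨t, ht, rfl⟩, hfr⟩ := hconn.inter_frontier_nonempty
    ⟨y + w, ⟨1, right_mem_Icc.2 zero_le_one, by simp⟩, hw⟩
    ⟨y, ⟨0, left_mem_Icc.2 zero_le_one, by simp⟩, hy⟩
  exact ⟨t, ht, hfr⟩

theorem IsCompact.exists_finset_subset_biUnion_ball {X : Type*} [PseudoMetricSpace X] {K : Set X}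
    (hK : IsCompact K) (hne : K.Nonempty) {δ : ℝ} (hδ : 0 < δ) :
    ∃ V : Finset X, V.Nonempty ∧ (V : Set X) ⊆ K ∧ K ⊆ ⋃ v ∈ V, ball v δ := by
  obtain ⟨V, hVK, hcover⟩ := hK.elim_nhds_subcover (ball · δ) fun x _ => ball_mem_nhds x hδ
  obtain ⟨u, hu⟩ := hne
  obtain ⟨v, hv, -⟩ := mem_iUnion₂.1 (hcover hu)
  exact ⟨V, ⟨v, hv⟩, hVK, hcover⟩

theorem MeasureTheory.Measure.exists_measure_le_card_mul {α ι : Type*} [MeasurableSpace α]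
    (μ : Measure α) {V : Finset ι} (hV : V.Nonempty) {A : Set α} {F : ι → Set α}
    (hA : A ⊆ ⋃ v ∈ V, F v) : ∃ v ∈ V, μ A ≤ V.card * μ (F v) := by
  obtain ⟨v, hv, hmax⟩ := V.exists_max_image (fun v => μ (F v)) hV
  refine ⟨v, hv, ?_⟩
  calc μ A ≤ ∑ w ∈ V, μ (F w) := (measure_mono hA).trans (measure_biUnion_finset_le V F)
    _ ≤ V.card • μ (F v) := Finset.sum_le_card_nsmul V _ _ hmax
    _ = V.card * μ (F v) := nsmul_eq_mul _ _

def EuclideanSpace.init (m : ℕ) (z : EuclideanSpace ℝ (Fin (m + 1))) : EuclideanSpace ℝ (Fin m) :=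
  WithLp.toLp 2 (Fin.init z)

namespace EuclideanSpace

theorem norm_init_le {m : ℕ} (z : EuclideanSpace ℝ (Fin (m + 1))) : ‖init m z‖ ≤ ‖z‖ := by
  have h : ‖z‖ ^ 2 = ‖init m z‖ ^ 2 + ‖z (Fin.last m)‖ ^ 2 := by
    simp only [norm_sq_eq, Fin.sum_univ_castSucc]
    rfl
  nlinarith [norm_nonneg z, norm_nonneg (init m z), sq_nonneg ‖z (Fin.last m)‖]

theorem lipschitzWith_init (m : ℕ) : LipschitzWith 1 (init m) :=
  LipschitzWith.of_dist_le_mul fun z₁ z₂ => by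
    rw [NNReal.coe_one, one_mul, dist_eq_norm, dist_eq_norm]
    exact norm_init_le (z₁ - z₂)

theorem volume_setOf_last_mem_and_init_mem (m : ℕ) (I : Set ℝ)
    (D : Set (EuclideanSpace ℝ (Fin m))) :
    volume {w : EuclideanSpace ℝ (Fin (m + 1)) | w (Fin.last m) ∈ I ∧ init m w ∈ D} =
      volume I * volume D := by
  set e := (MeasurableEquiv.toLp 2 (Fin (m + 1) → ℝ)).symm.trans
    (MeasurableEquiv.piFinSuccAbove (fun _ => ℝ) (Fin.last m))
  have he : MeasurePreserving e volume volume :=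
    (volume_preserving_piFinSuccAbove _ _).comp
      (volume_preserving_symm_measurableEquiv_toLp _)
  have hset : {w : EuclideanSpace ℝ (Fin (m + 1)) | w (Fin.last m) ∈ I ∧ init m w ∈ D} =
      e ⁻¹' (I ×ˢ (WithLp.toLp 2 ⁻¹' D)) := by
    ext w
    simp [e, init]
  rw [hset, he.measure_preimage_equiv, Measure.volume_eq_prod, Measure.prod_prod,
    (PiLp.volume_preserving_toLp (Fin m)).measure_preimage_emb
      (MeasurableEquiv.toLp 2 (Fin m → ℝ)).measurableEmbedding]

/-- `μH[m]` is normalised by the sup norm, not the Euclidean one, so only an inequality holds. -/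
theorem volume_le_hausdorffMeasure {m : ℕ} (A : Set (EuclideanSpace ℝ (Fin m))) :
    volume A ≤ μH[m] A := by
  have hofLp : LipschitzWith 1 (WithLp.ofLp : EuclideanSpace ℝ (Fin m) → Fin m → ℝ) :=
    PiLp.lipschitzWith_ofLp 2 _
  have hvol : (volume : Measure (Fin m → ℝ)) = μH[m] := by
    simpa using (hausdorffMeasure_pi_real (ι := Fin m)).symm
  calc volume A = volume (WithLp.toLp 2 ⁻¹' A) :=
        ((PiLp.volume_preserving_toLp (Fin m)).measure_preimage_emb
          (MeasurableEquiv.toLp 2 (Fin m → ℝ)).measurableEmbedding A).symm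
    _ = μH[m] (WithLp.ofLp '' A) := by
        rw [hvol]; exact congrArg _ ((WithLp.equiv 2 (Fin m → ℝ)).image_eq_preimage_symm A).symm
    _ ≤ μH[m] A := by simpa using hofLp.hausdorffMeasure_image_le (Nat.cast_nonneg m) A

end EuclideanSpace

theorem exists_orthonormalBasis_last_eq {F : Type*} [NormedAddCommGroup F] [InnerProductSpace ℝ F]
    [FiniteDimensional ℝ F] {m : ℕ} (hF : finrank ℝ F = m + 1) {v : F} (hv : ‖v‖ = 1) :
    ∃ b : OrthonormalBasis (Fin (m + 1)) ℝ F, b (Fin.last m) = v := by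
  have ho : Orthonormal ℝ (({Fin.last m} : Set (Fin (m + 1))).domRestrict fun _ => v) :=
    ⟨fun _ => hv, fun i j hij => absurd (Subtype.ext (i.2.trans j.2.symm)) hij⟩
  obtain ⟨b, hb⟩ := ho.exists_orthonormalBasis_extension_of_card_eq (by simpa using hF)
  exact ⟨b, hb _ rfl⟩

theorem volume_le_mul_hausdorffMeasure_of_forall_exists_add_smul_mem {F : Type*}
    [NormedAddCommGroup F] [InnerProductSpace ℝ F] [FiniteDimensional ℝ F] [MeasurableSpace F]
    [BorelSpace F] {m : ℕ} (hF : finrank ℝ F = m + 1) {v : F} (hv : ‖v‖ = 1) {I : Set ℝ}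
    {A S : Set F} (hAI : ∀ y ∈ A, ⟪v, y⟫ ∈ I) (hAS : ∀ y ∈ A, ∃ t : ℝ, y + t • v ∈ S) :
    volume A ≤ volume I * μH[m] S := by
  obtain ⟨b, hbv⟩ := exists_orthonormalBasis_last_eq hF hv
  set g : F → EuclideanSpace ℝ (Fin m) := EuclideanSpace.init m ∘ b.repr
  have hg : LipschitzWith 1 g := by
    simpa using (EuclideanSpace.lipschitzWith_init m).comp b.repr.lipschitz
  have hgv : ∀ y (t : ℝ), g (y + t • v) = g y := fun y t => by
    ext j
    simp [g, EuclideanSpace.init, Fin.init, ← hbv, (Fin.castSucc_lt_last j).ne]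
  calc volume A
      ≤ volume (b.repr ⁻¹' {w | w (Fin.last m) ∈ I ∧ EuclideanSpace.init m w ∈ g '' A}) :=
        measure_mono fun y hy => ⟨by simpa [b.repr_apply_apply, hbv] using hAI y hy, y, hy, rfl⟩
    _ = volume I * volume (g '' A) := by
        rw [← EuclideanSpace.volume_setOf_last_mem_and_init_mem]
        exact b.measurePreserving_measurableEquiv.measure_preimage_equiv _
    _ ≤ volume I * volume (g '' S) := by
        refine mul_le_mul_right (measure_mono ?_) _
        rintro - ⟨y, hy, rfl⟩
        obtain ⟨t, ht⟩ := hAS y hy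
        exact ⟨_, ht, hgv y t⟩
    _ ≤ volume I * μH[m] (g '' S) :=
        mul_le_mul_right (EuclideanSpace.volume_le_hausdorffMeasure _) _
    _ ≤ volume I * μH[m] S := by
        refine mul_le_mul_right ?_ _
        simpa using hg.hausdorffMeasure_image_le (Nat.cast_nonneg m) S

theorem exists_sub_norm_smul_mem_ball {E : Type*} [NormedAddCommGroup E] [NormedSpace ℝ E]
    {V : Set E} {δ R : ℝ} (hV : sphere (0 : E) 1 ⊆ ⋃ v ∈ V, ball v δ) {X y : E} (hyX : y ≠ X)
    (hR : ‖y - X‖ * δ ≤ R) : ∃ v ∈ V, y - ‖y - X‖ • v ∈ ball X R := by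
  set s := ‖y - X‖
  have hs : 0 < s := norm_pos_iff.2 (sub_ne_zero.2 hyX)
  have hu : s⁻¹ • (y - X) ∈ sphere (0 : E) 1 := by
    simp [s, norm_smul, hs.ne']
  obtain ⟨v, hv, huv⟩ := mem_iUnion₂.1 (hV hu)
  refine ⟨v, hv, ?_⟩
  have hdecomp : y - s • v - X = s • (s⁻¹ • (y - X) - v) := by
    rw [smul_sub, smul_inv_smul₀ hs.ne']; abel
  rw [mem_ball, dist_eq_norm, hdecomp, norm_smul, Real.norm_of_nonneg hs.le, ← dist_eq_norm]
  exact (mul_lt_mul_of_pos_left (mem_ball.1 huv) hs).trans_le hR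

theorem volume_setOf_sub_norm_smul_mem_ball_le {F : Type*}
    [NormedAddCommGroup F] [InnerProductSpace ℝ F] [FiniteDimensional ℝ F] [MeasurableSpace F]
    [BorelSpace F] {m : ℕ} (hF : finrank ℝ F = m + 1) {v : F} (hv : ‖v‖ = 1) {O : Set F}
    {x X : F} {r R : ℝ} (hX : ball X R ⊆ ball x r ∩ O) :
    volume {y ∈ ball x r \ closure O | y - ‖y - X‖ • v ∈ ball X R} ≤
      ENNReal.ofReal (2 * r) * μH[m] (ball x r ∩ frontier O) := by
  have hI : volume (Ioo (⟪v, x⟫ - r) (⟪v, x⟫ + r)) = ENNReal.ofReal (2 * r) := by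
    rw [Real.volume_Ioo]; ring_nf
  rw [← hI]
  refine volume_le_mul_hausdorffMeasure_of_forall_exists_add_smul_mem hF hv ?_ ?_
  · rintro y ⟨⟨hyx, -⟩, -⟩
    have h := (abs_real_inner_le_norm v (y - x)).trans_lt
      (by rwa [hv, one_mul, ← dist_eq_norm, ← mem_ball])
    rw [inner_sub_right, abs_sub_lt_iff] at h
    constructor <;> linarith
  · rintro y ⟨⟨hyx, hyO⟩, hQ⟩
    rw [sub_eq_add_neg] at hQ
    obtain ⟨t, ht, hfr⟩ :=
      exists_mem_Icc_add_smul_mem_frontier (fun h => hyO (subset_closure h)) (hX hQ).2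
    refine ⟨-(t * ‖y - X‖), ?_, ?_⟩
    · rw [neg_smul, ← smul_smul, ← smul_neg]
      exact (convex_ball x r).add_smul_mem hyx (hX hQ).1 ht
    · rw [neg_smul, ← smul_smul, ← smul_neg]
      exact hfr

theorem ENNReal.ofReal_div_mul_pow_le_of_ofReal_mul_pow_succ_le {c K r : ℝ} {n : ℕ} {H : ℝ≥0∞}
    (hK : 0 < K) (hr : 0 < r)
    (h : ENNReal.ofReal (c * r ^ (n + 1)) ≤ ENNReal.ofReal (K * r) * H) :
    ENNReal.ofReal (c / K * r ^ n) ≤ H := by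
  have hKr : 0 < K * r := by positivity
  refine (ENNReal.mul_le_mul_iff_right (ENNReal.ofReal_pos.2 hKr).ne' ENNReal.ofReal_ne_top).1 ?_
  rwa [← ENNReal.ofReal_mul hKr.le, show K * r * (c / K * r ^ n) = c * r ^ (n + 1) by
    field_simp; ring]

/-- Interior corkscrew plus exterior volume density implies the lower ADR bound (via the
relative isoperimetric inequality): if `O ⊂ ℝ^{n+1}` is bounded open satisfying the interior
corkscrew condition with constant `c₀`, with `|B(x,r) \ cl O| ≥ c r^{n+1}` for all `x ∈ ∂O`,
`0 < r < diam O`, and `H^n(∂O)` is locally finite, then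
`H^n(B(x,r) ∩ ∂O) ≥ c' r^n` with `c'` depending only on `n, c, c₀`. -/
theorem corkscrew_volume_density_implies_lowerADR (n : ℕ) (c c₀ : ℝ)
    (hc : 0 < c) (hc₀ : 0 < c₀) :
    ∃ c' : ℝ, 0 < c' ∧
      ∀ (O : Set (EuclideanSpace ℝ (Fin (n+1)))),
        IsOpen O → Bornology.IsBounded O → O.Nonempty → (frontier O).Nonempty →
        -- interior corkscrew condition
        (∀ x ∈ frontier O, ∀ r : ℝ, 0 < r → r < Metric.diam O →
          ∃ X, Metric.ball X (c₀ * r) ⊆ Metric.ball x r ∩ O) →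
        -- exterior volume density
        (∀ x ∈ frontier O, ∀ r : ℝ, 0 < r → r < Metric.diam O →
          ENNReal.ofReal (c * r ^ (n+1)) ≤ volume (Metric.ball x r \ closure O)) →
        -- H^n(∂O) locally finite
        (∀ (x : EuclideanSpace ℝ (Fin (n+1))) (r : ℝ),
          μH[(n : ℝ)] (Metric.ball x r ∩ frontier O) ≠ ⊤) →
        ∀ x ∈ frontier O, ∀ r : ℝ, 0 < r → r < Metric.diam O →
          ENNReal.ofReal (c' * r ^ n) ≤ μH[(n : ℝ)] (Metric.ball x r ∩ frontier O) := by
  obtain ⟨V, hVne, hVS, hVcover⟩ :=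
    (isCompact_sphere (0 : EuclideanSpace ℝ (Fin (n + 1))) 1).exists_finset_subset_biUnion_ball
      (NormedSpace.sphere_nonempty.2 zero_le_one) (half_pos hc₀)
  have hV : (0 : ℝ) < 2 * V.card := by have := hVne.card_pos; positivity
  refine ⟨c / (2 * V.card), by positivity, ?_⟩
  intro O _ _ _ _ hcork hvol _ x hx r hr hrd
  obtain ⟨X, hX⟩ := hcork x hx r hr hrd
  have hXc : X ∈ ball x r ∩ O := hX (mem_ball_self (by positivity))
  set E := ball x r \ closure O
  have hcover : E ⊆ ⋃ v ∈ V, {y ∈ E | y - ‖y - X‖ • v ∈ ball X (c₀ * r)} := by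
    intro y hy
    have hyX : y ≠ X := by rintro rfl; exact hy.2 (subset_closure hXc.2)
    have hR : ‖y - X‖ * (c₀ / 2) ≤ c₀ * r := by
      have htri := dist_triangle_right y X x
      rw [dist_eq_norm] at htri
      nlinarith [mem_ball.1 hy.1, mem_ball.1 hXc.1]
    obtain ⟨v, hv, hyv⟩ := exists_sub_norm_smul_mem_ball hVcover hyX hR
    exact mem_iUnion₂.2 ⟨v, hv, hy, hyv⟩
  obtain ⟨v, hv, hEv⟩ := volume.exists_measure_le_card_mul hVne hcover
  refine ENNReal.ofReal_div_mul_pow_le_of_ofReal_mul_pow_succ_le hV hr ?_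
  calc ENNReal.ofReal (c * r ^ (n + 1)) ≤ volume E := hvol x hx r hr hrd
    _ ≤ V.card * (ENNReal.ofReal (2 * r) * μH[n] (ball x r ∩ frontier O)) := by
        refine hEv.trans (mul_le_mul_right ?_ _)
        exact volume_setOf_sub_norm_smul_mem_ball_le finrank_euclideanSpace_fin
          (mem_sphere_zero_iff_norm.1 (hVS hv)) hX
    _ = ENNReal.ofReal (2 * V.card * r) * μH[n] (ball x r ∩ frontier O) := by
        rw [← mul_assoc, ← ENNReal.ofReal_natCast, ← ENNReal.ofReal_mul (Nat.cast_nonneg _)]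
        ring_nf
end
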